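/- (Non-validity of 4 for non-rigid constants) For an agent-referring constant a, the schema K_a p → K_a K_a p is not valid on the class of transitive term-modal frames: there exist a transitive term-modal model M (i.e., R(α) transitive for every agent α), a world w, and a valuation v such that M, w ⊨_v K_a p but M, w ⊭_v K_a K_a p. -/

import Mathlib

/-- The two sorts: agents and objects. -/
inductive Srt : Type | agt | obj
deriving DecidableEq

/-- Variables, tagged with a sort. -/
abbrev Var : Type := Srt × ℕ

/-- Terms: variables and (non-rigid) constants, each tagged with a sort. -/
inductive Tm : Type
  | var : Var → Tm
  | con : Var → Tm
deriving DecidableEq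

/-- The sort of a term. -/
def Tm.srt : Tm → Srt
  | .var x => x.1
  | .con c => c.1

/-- Formulas of the two-sorted term-modal language: atomic relations,
equality, negation, implication, universal quantification, and modal
operators `K t` indexed by terms (agent-referring terms in wffs). -/
inductive Fml : Type
  | rel : ℕ → List Tm → Fml
  | eq : Tm → Tm → Fml
  | neg : Fml → Fml
  | imp : Fml → Fml → Fml
  | all : Var → Fml → Fml
  | K : Tm → Fml → Fml

/-- A term-modal frame: worlds, a two-sorted (constant) domain of agents `DA`
and objects `DO`, and an accessibility relation for each agent. -/
structure TMFrame : Type 1 where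
  W : Type
  DA : Type
  DO : Type
  wne : Nonempty W
  ane : Nonempty DA
  one : Nonempty DO
  R : DA → W → W → Prop

/-- The full (disjoint-union) domain of a frame. -/
def TMFrame.D (F : TMFrame) : Type := F.DA ⊕ F.DO

/-- The sort of a domain element. -/
def sortOf {F : TMFrame} : F.D → Srt
  | .inl _ => .agt
  | .inr _ => .obj

/-- A model based on a frame: an interpretation of relation symbols and of
(non-rigid) constants, the latter respecting sorts. -/
structure TMModel (F : TMFrame) where
  relI : ℕ → F.W → List F.D → Prop
  conI : Var → F.W → F.D
  conSorted : ∀ c w, sortOf (conI c w) = c.1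

/-- A valuation: a sort-respecting assignment of domain elements to variables. -/
def Val (F : TMFrame) : Type := {v : Var → F.D // ∀ x, sortOf (v x) = x.1}

/-- Extension of a term at a world under a valuation (variables are rigid,
constants are not). -/
def ext {F : TMFrame} (M : TMModel F) (v : Val F) (w : F.W) : Tm → F.D
  | .var x => v.1 x
  | .con c => M.conI c w

/-- `v'` is an x-variant of `v`: they agree on all variables except possibly x. -/
def XVar {F : TMFrame} (v v' : Val F) (x : Var) : Prop :=
  ∀ z : Var, z ≠ x → v.1 z = v'.1 z

/-- Kripke-style truth at a world of a model under a valuation. -/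
def sat {F : TMFrame} (M : TMModel F) (v : Val F) (w : F.W) : Fml → Prop
  | .rel p ts => M.relI p w (ts.map (ext M v w))
  | .eq t u => ext M v w t = ext M v w u
  | .neg φ => ¬ sat M v w φ
  | .imp φ ψ => sat M v w φ → sat M v w ψ
  | .all x φ => ∀ v' : Val F, XVar v v' x → sat M v' w φ
  | .K t φ => ∀ (a : F.DA) (w' : F.W),
      ext M v w t = Sum.inl a → F.R a w w' → sat M v w' φ

/-!
Non-rigidity lets the constant `a` name one agent `α` at `w` and another agent `β` at the
`α`-successor `w'` of `w`. Then `K_a p` at `w` only looks one `α`-step ahead, whereas `K_a K_a p`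
also follows the `β`-step from `w'` to `t`, where `p` fails. Each `R(α)`, `R(β)` is a single edge,
so transitivity holds vacuously.
-/

theorem sat_K_con_iff {F : TMFrame} {M : TMModel F} {v : Val F} {w : F.W} {c : Var}
    {α : F.DA} (hc : M.conI c w = Sum.inl α) (φ : Fml) :
    sat M v w (Fml.K (Tm.con c) φ) ↔ ∀ w', F.R α w w' → sat M v w' φ := by
  simp only [sat, ext, hc]
  exact ⟨fun h w' => h α w' rfl, fun h _ w' hα => by cases hα; exact h w'⟩

theorem not_sat_K_K_con {F : TMFrame} {M : TMModel F} {v : Val F} {c : Var} {φ : Fml}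
    {w w' t : F.W} {α β : F.DA} (hα : M.conI c w = Sum.inl α) (hww' : F.R α w w')
    (hβ : M.conI c w' = Sum.inl β) (hw't : F.R β w' t) (hφ : ¬ sat M v t φ) :
    ¬ sat M v w (Fml.K (Tm.con c) (Fml.K (Tm.con c) φ)) := by
  rw [sat_K_con_iff hα]
  exact fun h => hφ ((sat_K_con_iff hβ φ).1 (h w' hww') t hw't)

noncomputable def TMFrame.defaultElem (F : TMFrame) : Srt → F.D
  | .agt => Sum.inl F.ane.some
  | .obj => Sum.inr F.one.some

theorem TMFrame.sortOf_defaultElem (F : TMFrame) (s : Srt) : sortOf (F.defaultElem s) = s := by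
  cases s <;> rfl

noncomputable def Val.default (F : TMFrame) : Val F :=
  ⟨fun x => F.defaultElem x.1, fun x => F.sortOf_defaultElem x.1⟩

namespace FourCountermodel

inductive World : Type
  | w | w' | t

inductive Agent : Type
  | α | β

inductive Acc : Agent → World → World → Prop
  | α : Acc .α .w .w'
  | β : Acc .β .w' .t

abbrev frame : TMFrame :=
  ⟨World, Agent, Unit, ⟨.w⟩, ⟨.α⟩, ⟨()⟩, Acc⟩

def agentAt : World → Agent
  | .w' => .β
  | _ => .α

def model : TMModel frame where
  relI _ u _ := u ≠ .t
  conI c u := match c.1 with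
    | .agt => Sum.inl (agentAt u)
    | .obj => Sum.inr ()
  conSorted c _ := by cases c.1 <;> rfl

theorem acc_trans (a : Agent) (u u' u'' : World) (h : Acc a u u') (h' : Acc a u' u'') :
    Acc a u u'' := by
  cases h <;> cases h'

end FourCountermodel

open FourCountermodel in
/-- Non-validity of 4 for non-rigid constants: for any
agent-referring constant a and atomic p, there are a term-modal model all of
whose accessibility relations are transitive, a world w, and a valuation v
such that K_a p holds at w but K_a K_a p does not. -/
theorem four_not_valid_for_nonrigid_constants (a p : ℕ) :
    ∃ (F : TMFrame) (M : TMModel F) (w : F.W) (v : Val F),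
      (∀ α : F.DA, ∀ u u' u'' : F.W, F.R α u u' → F.R α u' u'' → F.R α u u'') ∧
      sat M v w (Fml.K (Tm.con (Srt.agt, a)) (Fml.rel p [])) ∧
      ¬ sat M v w (Fml.K (Tm.con (Srt.agt, a))
          (Fml.K (Tm.con (Srt.agt, a)) (Fml.rel p []))) := by
  refine ⟨frame, model, World.w, Val.default frame, acc_trans, ?_, ?_⟩
  · rw [sat_K_con_iff (α := Agent.α) rfl]
    rintro _ ⟨⟩
    simp [sat, model]
  · exact not_sat_K_K_con (w' := World.w') (t := World.t) rfl Acc.α rfl Acc.β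
      (by simp [sat, model])
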